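/- arXiv:2407.06008 — 2 statements merged into one kernel-verified Lean document; each statement's English description precedes it below -/
import Mathlib

section
/- For every matroid M on a finite ground set, Crapo's beta invariant is nonnegative: β(M) ≥ 0. -/
/-!
STATEMENT 5: For every matroid `M` on a finite ground set, Crapo's beta invariant is
nonnegative: `β(M) ≥ 0`, where
`β(M) = (-1)^{r(M)} Σ_{K flat of M} μ(cl(∅), K) · r(K)`,
`μ` being the Möbius function of the lattice of flats of `M` and `r` the rank function.
-/

open Set
open scoped Classical

/-- The rank of a set `X` in a matroid `M`: the largest cardinality of an independent
subset of `X`. -/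
noncomputable def matroidRk {α : Type*} (M : Matroid α) (X : Set α) : ℕ :=
  sSup {n | ∃ I, M.Indep I ∧ I ⊆ X ∧ I.ncard = n}

/-- The rank of the matroid `M` itself. -/
noncomputable def matroidRank {α : Type*} (M : Matroid α) : ℕ :=
  matroidRk M M.E

/-- `mu` is the Möbius function of the lattice of flats of `M`: it satisfies the defining
recursion `Σ_{J flat, K ⊆ J ⊆ L} mu K J = δ_{K,L}` for all flats `K ⊆ L`.  (This property
determines `mu` uniquely on pairs of flats `K ⊆ L`.) -/
def IsMobiusOfFlats {α : Type*} (M : Matroid α) (mu : Set α → Set α → ℤ) : Prop :=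
  ∀ K L : Set α, M.IsFlat K → M.IsFlat L → K ⊆ L →
    (∑ᶠ J ∈ {J : Set α | M.IsFlat J ∧ K ⊆ J ∧ J ⊆ L}, mu K J) = if K = L then 1 else 0

/-- Crapo's beta invariant
`β(M) = (-1)^{r(M)} Σ_{K flat of M} μ(cl(∅), K) · r(K)`. -/
noncomputable def crapoBeta {α : Type*} (M : Matroid α) (mu : Set α → Set α → ℤ) : ℤ :=
  (-1) ^ matroidRank M *
    ∑ᶠ K ∈ {K : Set α | M.IsFlat K}, mu (M.closure ∅) K * (matroidRk M K : ℤ)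


/-!
For flats `K`, the signed count `Σ_{A ⊆ E \ cl ∅, cl A = K} (-1)^{|A|}` satisfies the Möbius
recursion, because the sets `A ⊆ E \ cl ∅` with `cl A ⊆ L` are exactly the subsets of
`L \ cl ∅`, whose signed count is `[L = cl ∅]`; so it equals `μ(cl ∅, K)`. Summing against
`r(K) = r(cl A)` turns `β(M)` into `(-1)^{r(E)} Σ_{A ⊆ E \ cl ∅} (-1)^{|A|} r(A)`, an expression
that makes sense for every matroid rank function on a finite set. There a loop contributes `0`,
a coloop `1` or `0`, and any other element `e` gives `β(M) = β(M \ e) + β(M / e)`, so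
nonnegativity follows by induction on the ground set.
-/

open Finset

section RankFunction

variable {α : Type*} [DecidableEq α]

structure IsRankFn (r : Finset α → ℕ) : Prop where
  empty : r ∅ = 0
  mono : Monotone r
  insert_le : ∀ A x, r (insert x A) ≤ r A + 1
  submod : ∀ A B, r (A ∪ B) + r (A ∩ B) ≤ r A + r B

def betaSum (r : Finset α → ℕ) (E : Finset α) : ℤ :=
  (-1) ^ r E * ∑ A ∈ E.powerset, (-1) ^ #A * (r A : ℤ)

/-- The rank function of `M / e` when `e` is a nonloop, i.e. `r {e} = 1`. -/
def contractRk (r : Finset α → ℕ) (e : α) (A : Finset α) : ℕ :=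
  r (insert e A) - 1

variable {r : Finset α → ℕ} {e : α} {s : Finset α}

lemma sum_powerset_insert_neg_one_pow_mul (he : e ∉ s) :
    ∑ A ∈ (insert e s).powerset, (-1 : ℤ) ^ #A * (r A : ℤ)
      = ∑ A ∈ s.powerset, (-1) ^ #A * ((r A : ℤ) - r (insert e A)) := by
  rw [sum_powerset_insert he, ← sum_add_distrib]
  refine sum_congr rfl fun A hA => ?_
  rw [card_insert_of_notMem fun heA => he (mem_powerset.1 hA heA)]
  ring

namespace IsRankFn

lemma insert_eq_of_singleton_eq_zero (hr : IsRankFn r) (he : r {e} = 0) (A : Finset α) :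
    r (insert e A) = r A := by
  have := hr.submod A {e}
  rw [Finset.union_singleton, he] at this
  exact le_antisymm (by omega) (hr.mono (subset_insert e A))

lemma insert_eq_add_one_of_subset (hr : IsRankFn r) (he : r (insert e s) = r s + 1)
    {A : Finset α} (hA : A ⊆ s) : r (insert e A) = r A + 1 := by
  have hsub := hr.submod (insert e A) s
  have hinter := hr.mono (subset_inter (subset_insert e A) hA)
  rw [Finset.insert_union, Finset.union_eq_right.2 hA, he] at hsub
  have := hr.insert_le A e
  omega

lemma singleton_le_one (hr : IsRankFn r) (e : α) : r {e} ≤ 1 := by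
  simpa [hr.empty] using hr.insert_le ∅ e

lemma one_le_insert (hr : IsRankFn r) (he : r {e} = 1) (A : Finset α) : 1 ≤ r (insert e A) :=
  he ▸ hr.mono (singleton_subset_iff.2 (mem_insert_self e A))

lemma contract (hr : IsRankFn r) (he : r {e} = 1) : IsRankFn (contractRk r e) where
  empty := by simp [contractRk, he]
  mono A B hAB := Nat.sub_le_sub_right (hr.mono (insert_subset_insert e hAB)) 1
  insert_le A x := by
    have := hr.insert_le (insert e A) x
    rw [Finset.insert_comm] at this
    simp only [contractRk]
    omega
  submod A B := by
    have hsub := hr.submod (insert e A) (insert e B)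
    rw [← Finset.insert_union_distrib, ← Finset.insert_inter_distrib] at hsub
    have := hr.one_le_insert he (A ∪ B)
    have := hr.one_le_insert he (A ∩ B)
    have := hr.one_le_insert he A
    have := hr.one_le_insert he B
    simp only [contractRk]
    omega

lemma betaSum_insert_of_loop (hr : IsRankFn r) (he : e ∉ s) (h0 : r {e} = 0) :
    betaSum r (insert e s) = 0 := by
  rw [betaSum, sum_powerset_insert_neg_one_pow_mul he]
  simp [hr.insert_eq_of_singleton_eq_zero h0]

lemma betaSum_insert_of_coloop (hr : IsRankFn r) (he : e ∉ s) (hcol : r (insert e s) = r s + 1) :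
    betaSum r (insert e s) = if s = ∅ then 1 else 0 := by
  have hsum : ∑ A ∈ s.powerset, (-1 : ℤ) ^ #A * ((r A : ℤ) - r (insert e A))
      = -∑ A ∈ s.powerset, (-1) ^ #A := by
    rw [← sum_neg_distrib]
    refine sum_congr rfl fun A hA => ?_
    rw [hr.insert_eq_add_one_of_subset hcol (mem_powerset.1 hA)]
    push_cast
    ring
  rw [betaSum, sum_powerset_insert_neg_one_pow_mul he, hsum, sum_powerset_neg_one_pow_card, hcol]
  split_ifs with hs
  · simp [hs, hr.empty]
  · simp

lemma betaSum_insert_eq_add (hr : IsRankFn r) (he : e ∉ s) (h1 : r {e} = 1)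
    (hnc : r (insert e s) = r s) :
    betaSum r (insert e s) = betaSum r s + betaSum (contractRk r e) s := by
  have hs : s ≠ ∅ := by
    rintro rfl
    simp [hr.empty, h1] at hnc
  have hcast : ∀ A, (contractRk r e A : ℤ) = r (insert e A) - 1 := fun A =>
    Nat.cast_sub (hr.one_le_insert h1 A)
  have hsum : ∑ A ∈ s.powerset, (-1 : ℤ) ^ #A * ((r A : ℤ) - r (insert e A))
      = ∑ A ∈ s.powerset, (-1) ^ #A * (r A : ℤ)
        - ∑ A ∈ s.powerset, (-1) ^ #A * (contractRk r e A : ℤ)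
        - ∑ A ∈ s.powerset, (-1) ^ #A := by
    rw [← sum_sub_distrib, ← sum_sub_distrib]
    refine sum_congr rfl fun A _ => ?_
    rw [hcast]
    ring
  obtain ⟨k, hk⟩ : ∃ k, r (insert e s) = k + 1 :=
    ⟨_, (Nat.succ_pred_eq_of_pos (hr.one_le_insert h1 s)).symm⟩
  have hexp : contractRk r e s = k := by simp [contractRk, hk]
  simp only [betaSum, hexp, hk, ← hnc, pow_succ]
  rw [sum_powerset_insert_neg_one_pow_mul he, hsum, sum_powerset_neg_one_pow_card, if_neg hs]
  ring

theorem betaSum_nonneg (hr : IsRankFn r) (E : Finset α) : 0 ≤ betaSum r E := by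
  induction E using Finset.induction_on generalizing r with
  | empty => simp [betaSum, hr.empty]
  | insert e s he ih =>
    obtain h0 | h1 : r {e} = 0 ∨ r {e} = 1 := by
      have := hr.singleton_le_one e
      omega
    · rw [hr.betaSum_insert_of_loop he h0]
    by_cases hcol : r (insert e s) = r s + 1
    · rw [hr.betaSum_insert_of_coloop he hcol]
      split_ifs <;> norm_num
    · have hnc : r (insert e s) = r s :=
        le_antisymm (by have := hr.insert_le s e; omega) (hr.mono (subset_insert e s))
      rw [hr.betaSum_insert_eq_add he h1 hnc]
      exact add_nonneg (ih hr) (ih (hr.contract h1))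

end IsRankFn
end RankFunction

section Rank

variable {α : Type*} {M : Matroid α}

lemma cast_matroidRk [M.RankFinite] (X : Set α) : (matroidRk M X : ℕ∞) = M.eRk X := by
  obtain ⟨I, hI⟩ := M.exists_isBasis' X
  have hIfin : I.Finite := hI.indep.finite
  suffices matroidRk M X = I.ncard by rw [this, hIfin.cast_ncard_eq, hI.eRk_eq_encard]
  refine IsGreatest.csSup_eq ⟨⟨I, hI.indep, hI.subset, rfl⟩, ?_⟩
  rintro _ ⟨J, hJ, hJX, rfl⟩
  have hle : J.encard ≤ I.encard := hI.eRk_eq_encard ▸ hJ.encard_le_eRk_of_subset hJX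
  rwa [← hJ.finite.cast_ncard_eq, ← hIfin.cast_ncard_eq, Nat.cast_le] at hle

lemma matroidRk_closure [M.RankFinite] (X : Set α) :
    matroidRk M (M.closure X) = matroidRk M X := by
  exact_mod_cast (cast_matroidRk _).trans ((M.eRk_closure_eq X).trans (cast_matroidRk X).symm)

lemma matroidRk_ground_sdiff_loops [M.RankFinite] :
    matroidRk M (M.E \ M.loops) = matroidRank M := by
  have := M.eRk_eq_eRk_sdiff_eRk_le_zero M.E M.eRk_loops.le
  rw [← cast_matroidRk, ← cast_matroidRk] at this
  exact_mod_cast this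

variable [DecidableEq α]

lemma isRankFn_matroidRk [M.RankFinite] : IsRankFn fun A : Finset α => matroidRk M A where
  empty := by exact_mod_cast (cast_matroidRk (M := M) ∅).trans M.eRk_empty
  mono A B hAB := by
    have := M.eRk_mono (Finset.coe_subset.2 hAB)
    rwa [← cast_matroidRk, ← cast_matroidRk, Nat.cast_le] at this
  insert_le A x := by
    have := M.eRk_insert_le_add_one x A
    rw [← cast_matroidRk, ← cast_matroidRk, ← Finset.coe_insert] at this
    exact_mod_cast this
  submod A B := by
    have := M.eRk_inter_add_eRk_union_le A B
    rw [← cast_matroidRk, ← cast_matroidRk, ← cast_matroidRk, ← cast_matroidRk,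
      ← Finset.coe_inter, ← Finset.coe_union] at this
    have : matroidRk M ↑(A ∩ B) + matroidRk M ↑(A ∪ B) ≤ matroidRk M ↑A + matroidRk M ↑B := by
      exact_mod_cast this
    simpa only [add_comm] using this

end Rank

lemma Finset.eqOn_of_sum_filter_le_eq {β M : Type*} [PartialOrder β] [AddCancelCommMonoid M]
    (S : Finset β) {f g : β → M}
    (h : ∀ b ∈ S, ∑ c ∈ S with c ≤ b, f c = ∑ c ∈ S with c ≤ b, g c) :
    Set.EqOn f g S := by
  intro b hb
  refine (S.finite_toSet.wellFoundedOn (r := (· < ·))).induction (P := fun b => f b = g b) hb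
    fun b hb ih => ?_
  have hmem : b ∈ S.filter (· ≤ b) := Finset.mem_filter.2 ⟨hb, le_rfl⟩
  have hlt : ∀ c ∈ (S.filter (· ≤ b)).erase b, f c = g c := fun c hc => by
    obtain ⟨hcb, hc⟩ := Finset.mem_erase.1 hc
    obtain ⟨hcS, hcle⟩ := Finset.mem_filter.1 hc
    exact ih c hcS (lt_of_le_of_ne hcle hcb)
  have := h b hb
  rw [← Finset.add_sum_erase _ _ hmem, ← Finset.add_sum_erase _ _ hmem,
    Finset.sum_congr rfl hlt] at this
  exact add_right_cancel this

section Flats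

variable {α : Type*} (M : Matroid α) [M.Finite]

noncomputable def nonloopFinset : Finset α :=
  (M.ground_finite.sdiff (t := M.loops)).toFinset

noncomputable def flatFinset : Finset (Set α) :=
  (M.ground_finite.finite_subsets.subset fun _ hK => hK.subset_ground :
    {K | M.IsFlat K}.Finite).toFinset

noncomputable def crosscutSum (K : Set α) : ℤ :=
  ∑ A ∈ (nonloopFinset M).powerset.filter (fun A : Finset α => M.closure A = K), (-1) ^ #A

variable {M}

@[simp]
lemma coe_nonloopFinset : (nonloopFinset M : Set α) = M.E \ M.loops := by
  simp [nonloopFinset]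

@[simp]
lemma mem_nonloopFinset {e : α} : e ∈ nonloopFinset M ↔ e ∈ M.E ∧ e ∉ M.loops := by
  simp [nonloopFinset]

@[simp]
lemma coe_flatFinset : (flatFinset M : Set (Set α)) = {K | M.IsFlat K} := by
  simp [flatFinset]

@[simp]
lemma mem_flatFinset {K : Set α} : K ∈ flatFinset M ↔ M.IsFlat K := by
  simp [flatFinset]

lemma sum_flatFinset_crosscutSum_mul (f : Set α → ℤ) :
    ∑ K ∈ flatFinset M, crosscutSum M K * f K
      = ∑ A ∈ (nonloopFinset M).powerset, (-1) ^ #A * f (M.closure (A : Finset α)) := by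
  calc ∑ K ∈ flatFinset M, crosscutSum M K * f K
      = ∑ K ∈ flatFinset M,
          ∑ A ∈ (nonloopFinset M).powerset.filter (fun A : Finset α => M.closure A = K),
            (-1) ^ #A * f (M.closure (A : Finset α)) := by
        refine Finset.sum_congr rfl fun K _ => ?_
        rw [crosscutSum, Finset.sum_mul]
        exact Finset.sum_congr rfl fun A hA => by rw [(Finset.mem_filter.1 hA).2]
    _ = _ := Finset.sum_fiberwise_of_maps_to (fun A _ => mem_flatFinset.2 (M.isFlat_closure _)) _

lemma sum_crosscutSum_of_subset {L : Set α} (hL : M.IsFlat L) :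
    ∑ K ∈ flatFinset M with K ⊆ L, crosscutSum M K = if M.loops = L then 1 else 0 := by
  have h := sum_flatFinset_crosscutSum_mul (M := M) fun K => if K ⊆ L then 1 else 0
  simp only [mul_ite, mul_one, mul_zero, ← Finset.sum_filter] at h
  have hsubsets : (nonloopFinset M).powerset.filter (fun A : Finset α => M.closure A ⊆ L)
      = ((nonloopFinset M).filter (· ∈ L)).powerset := by
    ext A
    rw [Finset.mem_filter, Finset.mem_powerset, Finset.mem_powerset, ← Finset.coe_subset,
      ← Finset.coe_subset, Finset.coe_filter, Set.ofPred_and, Finset.setOfPred_mem,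
      Set.ofPred_mem_eq, coe_nonloopFinset, Set.subset_inter_iff]
    exact and_congr_right fun hA => ⟨(M.subset_closure _ (hA.trans sdiff_subset)).trans,
      fun h => hL.closure ▸ M.closure_subset_closure h⟩
  have hempty : (nonloopFinset M).filter (· ∈ L) = ∅ ↔ M.loops = L := by
    rw [Finset.filter_eq_empty_iff]
    refine ⟨fun h => hL.loops_subset.antisymm fun x hxL => ?_, fun h x hx hxL => ?_⟩
    · by_contra hx
      exact h (mem_nonloopFinset.2 ⟨hL.subset_ground hxL, hx⟩) hxL
    · exact (mem_nonloopFinset.1 hx).2 (h ▸ hxL)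
  rw [h, hsubsets, sum_powerset_neg_one_pow_card]
  exact if_congr hempty rfl rfl

lemma mobius_eq_crosscutSum {mu : Set α → Set α → ℤ} (hmu : IsMobiusOfFlats M mu)
    {K : Set α} (hK : M.IsFlat K) : mu M.loops K = crosscutSum M K := by
  refine Finset.eqOn_of_sum_filter_le_eq (flatFinset M) (fun L hL => ?_) (mem_flatFinset.2 hK)
  rw [mem_flatFinset] at hL
  have hmuL := hmu _ L (M.isFlat_closure ∅) hL hL.loops_subset
  have hflats : {J | M.IsFlat J ∧ M.closure ∅ ⊆ J ∧ J ⊆ L} = ↑((flatFinset M).filter (· ⊆ L)) := by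
    ext J
    simp only [Finset.coe_filter, mem_flatFinset]
    exact ⟨fun h => ⟨h.1, h.2.2⟩, fun h => ⟨h.1, h.1.loops_subset, h.2⟩⟩
  rw [hflats, finsum_mem_coe_finset, M.closure_empty] at hmuL
  rw [sum_crosscutSum_of_subset hL, hmuL]

end Flats

theorem crapoBeta_nonneg {α : Type*} (M : Matroid α) [M.Finite]
    (mu : Set α → Set α → ℤ) (hmu : IsMobiusOfFlats M mu) :
    0 ≤ crapoBeta M mu := by
  have hmu_flat : ∀ K ∈ flatFinset M, mu (M.closure ∅) K * (matroidRk M K : ℤ)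
      = crosscutSum M K * (matroidRk M K : ℤ) := fun K hK => by
    rw [M.closure_empty, mobius_eq_crosscutSum hmu (mem_flatFinset.1 hK)]
  rw [crapoBeta, ← coe_flatFinset, finsum_mem_coe_finset, Finset.sum_congr rfl hmu_flat,
    sum_flatFinset_crosscutSum_mul]
  simp only [matroidRk_closure]
  rw [← matroidRk_ground_sdiff_loops, ← coe_nonloopFinset]
  exact isRankFn_matroidRk.betaSum_nonneg (nonloopFinset M)
end

section
/- Let M be a matroid on a finite ground set with lattice of flats L(M), bottom flat cl(∅), Möbius function μ of L(M), and rank function r. Then for every flat K of M, the unsigned Möbius value μ⁺(K) = (-1)^{r(K)} μ(cl(∅), K) is strictly positive. -/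
/-!
STATEMENT 7: Let `M` be a matroid on a finite ground set with lattice of flats `L(M)`,
bottom flat `cl(∅)`, Möbius function `μ` of `L(M)`, and rank function `r`.  Then for every
flat `K` of `M`, the unsigned Möbius value `μ⁺(K) = (-1)^{r(K)} μ(cl(∅), K)` is strictly
positive.
-/

open Set
open scoped Classical

/-! Fix a nonloop `a ∈ K`. By Weisner's theorem, `μ(cl ∅, H)` sums to zero over the flats `H`
with `cl (H ∪ {a}) = K`. Apart from `K` itself these are flats not containing `a`, hence of rank
`r(K) - 1`, and there is at least one of them (the closure of `B \ {a}` for a basis `B ∋ a` of `K`).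
So `μ(cl ∅, K)` is minus a nonempty sum of values that, by induction on the rank, all have sign
`(-1)^(r(K) - 1)`. -/

theorem Set.Finite.eq_zero_of_forall_finsum_mem_le_eq_zero {β G : Type*} [PartialOrder β]
    [AddCommMonoid G] {S : Set β} (hS : S.Finite) {g : β → G}
    (h : ∀ z ∈ S, ∑ᶠ w ∈ {w ∈ S | w ≤ z}, g w = 0) {z : β} (hz : z ∈ S) : g z = 0 := by
  refine (hS.wellFoundedOn (r := (· < ·))).induction hz (P := fun z => g z = 0)
    fun z hz ih => ?_
  have hsplit : {w ∈ S | w ≤ z} = insert z {w ∈ S | w < z} := by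
    ext w
    simp only [le_iff_lt_or_eq, mem_insert_iff, mem_ofPred_eq]
    grind
  have := h z hz
  rwa [hsplit, finsum_mem_insert _ (by simp) (hS.subset fun _ hw => hw.1),
    finsum_mem_eq_zero_of_forall_eq_zero fun w hw => ih w hw.1 hw.2, add_zero] at this

namespace Matroid

variable {α : Type*} {M : Matroid α} {K H : Set α} {a : α}

lemma finite_setOf_isFlat (M : Matroid α) [M.Finite] : {F | M.IsFlat F}.Finite :=
  M.ground_finite.finite_subsets.subset fun _ hF => hF.subset_ground

lemma natCast_matroidRk [M.Finite] (X : Set α) : (matroidRk M X : ℕ∞) = M.eRk X := by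
  obtain ⟨I, hI⟩ := M.exists_isBasis' X
  suffices matroidRk M X = I.ncard by
    rw [this, hI.indep.finite.cast_ncard_eq, hI.encard_eq_eRk]
  refine IsGreatest.csSup_eq ⟨⟨I, hI.indep, hI.subset, rfl⟩, ?_⟩
  rintro _ ⟨J, hJ, hJX, rfl⟩
  have hle := hJ.encard_le_eRk_of_subset hJX
  rw [← hI.encard_eq_eRk, ← hJ.finite.cast_ncard_eq, ← hI.indep.finite.cast_ncard_eq] at hle
  exact_mod_cast hle

lemma matroidRk_closure_empty (M : Matroid α) [M.Finite] : matroidRk M (M.closure ∅) = 0 := by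
  exact_mod_cast (natCast_matroidRk _).trans ((M.eRk_closure_eq ∅).trans M.eRk_empty)

lemma IsFlat.eq_closure_empty_of_matroidRk_eq_zero [M.Finite] (hK : M.IsFlat K)
    (h : matroidRk M K = 0) : K = M.closure ∅ := by
  have h0 : M.eRk K = 0 := by rw [← natCast_matroidRk, h, Nat.cast_zero]
  exact (eRk_eq_zero_iff hK.subset_ground |>.1 h0).antisymm hK.loops_subset

lemma IsFlat.matroidRk_closure_insert [M.Finite] (hH : M.IsFlat H) (ha : a ∈ M.E \ H) :
    matroidRk M (M.closure (insert a H)) = matroidRk M H + 1 := by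
  rw [← hH.closure] at ha
  have h := eRk_insert_eq_add_one ha
  rw [← eRk_closure_eq, ← natCast_matroidRk, ← natCast_matroidRk] at h
  exact_mod_cast h

lemma IsFlat.exists_isFlat_notMem_closure_insert_eq (hK : M.IsFlat K) (haK : a ∈ K)
    (ha : a ∉ M.closure ∅) : ∃ H, M.IsFlat H ∧ a ∉ H ∧ M.closure (insert a H) = K := by
  have hna : M.IsNonloop a := isNonloop_iff_mem_compl_loops.2 ⟨hK.subset_ground haK, ha⟩
  obtain ⟨B, hB, haB⟩ := hna.indep.subset_isBasis_of_subset (singleton_subset_iff.2 haK)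
    hK.subset_ground
  refine ⟨M.closure (B \ {a}), isFlat_closure _,
    hB.indep.notMem_closure_sdiff_of_mem (haB rfl), ?_⟩
  rw [closure_insert_closure_eq_closure_insert, insert_sdiff_singleton,
    insert_eq_self.2 (haB rfl), hB.closure_eq_closure, hK.closure]

end Matroid

namespace IsMobiusOfFlats

open Matroid

variable {α : Type*} {M : Matroid α} {mu : Set α → Set α → ℤ} {K L Z : Set α} {a : α}

lemma apply_self (hmu : IsMobiusOfFlats M mu) (hK : M.IsFlat K) : mu K K = 1 := by
  have h := hmu K K hK hK Subset.rfl
  rwa [show {J | M.IsFlat J ∧ K ⊆ J ∧ J ⊆ K} = {K} from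
      Subset.antisymm (fun J hJ => hJ.2.2.antisymm hJ.2.1)
        (by rintro _ rfl; exact ⟨hK, rfl.le, rfl.le⟩),
    finsum_mem_singleton, if_pos rfl] at h

lemma finsum_closure_empty (hmu : IsMobiusOfFlats M mu) (hL : M.IsFlat L) :
    ∑ᶠ J ∈ {J | M.IsFlat J ∧ J ⊆ L}, mu (M.closure ∅) J = if M.closure ∅ = L then 1 else 0 := by
  have h := hmu _ L (isFlat_closure ∅) hL hL.loops_subset
  rwa [show {J | M.IsFlat J ∧ M.closure ∅ ⊆ J ∧ J ⊆ L} = {J | M.IsFlat J ∧ J ⊆ L} from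
    Set.ext fun J => ⟨fun hJ => ⟨hJ.1, hJ.2.2⟩, fun hJ => ⟨hJ.1, hJ.1.loops_subset, hJ.2⟩⟩] at h

/-- Weisner's theorem. Grouping the flats `H ⊆ W` by `cl (insert a H)` turns the defining sum
of `μ` over them, which vanishes as `a ∈ W \ cl ∅`, into the sum of the fibre sums over the flats
`V ⊆ W` containing `a`. -/
lemma finsum_closure_insert_eq_zero [M.Finite] (hmu : IsMobiusOfFlats M mu)
    (ha : a ∉ M.closure ∅) (hZ : M.IsFlat Z) (haZ : a ∈ Z) :
    ∑ᶠ H ∈ {H | M.IsFlat H ∧ M.closure (insert a H) = Z}, mu (M.closure ∅) H = 0 := by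
  refine (M.finite_setOf_isFlat.subset fun _ hW => hW.1).eq_zero_of_forall_finsum_mem_le_eq_zero
    (g := fun W => ∑ᶠ H ∈ {H | M.IsFlat H ∧ M.closure (insert a H) = W}, mu (M.closure ∅) H)
    ?_ (show Z ∈ {W | M.IsFlat W ∧ a ∈ W} from ⟨hZ, haZ⟩)
  rintro W ⟨hW, haW⟩
  have hfibres : ⋃ V ∈ {V ∈ {V | M.IsFlat V ∧ a ∈ V} | V ⊆ W},
      {H | M.IsFlat H ∧ M.closure (insert a H) = V} = {H | M.IsFlat H ∧ H ⊆ W} := by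
    ext H
    simp only [mem_iUnion, mem_ofPred_eq, exists_prop]
    constructor
    · rintro ⟨V, ⟨-, hVW⟩, hH, rfl⟩
      exact ⟨hH, (M.subset_closure_of_subset' (subset_insert a H) hH.subset_ground).trans hVW⟩
    · rintro ⟨hH, hHW⟩
      refine ⟨_, ⟨⟨isFlat_closure _, M.mem_closure_of_mem' (mem_insert a H)
        (hW.subset_ground haW)⟩, ?_⟩, hH, rfl⟩
      rw [← hW.closure]
      exact M.closure_subset_closure (insert_subset haW hHW)
  have hdisj : {V ∈ {V | M.IsFlat V ∧ a ∈ V} | V ⊆ W}.PairwiseDisjoint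
      fun V => {H | M.IsFlat H ∧ M.closure (insert a H) = V} :=
    fun V _ V' _ hne => disjoint_left.2 fun H h h' => hne (h.2.symm.trans h'.2)
  rw [← finsum_mem_biUnion hdisj (M.finite_setOf_isFlat.subset fun _ hV => hV.1.1)
    fun _ _ => M.finite_setOf_isFlat.subset fun _ hH => hH.1, hfibres,
    hmu.finsum_closure_empty hW, if_neg (ne_of_mem_of_not_mem' haW ha).symm]

lemma apply_closure_empty_eq_neg_finsum [M.Finite] (hmu : IsMobiusOfFlats M mu)
    (hK : M.IsFlat K) (haK : a ∈ K) (ha : a ∉ M.closure ∅) :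
    mu (M.closure ∅) K =
      -∑ᶠ H ∈ {H | M.IsFlat H ∧ a ∉ H ∧ M.closure (insert a H) = K}, mu (M.closure ∅) H := by
  have hsplit : {H | M.IsFlat H ∧ M.closure (insert a H) = K} =
      insert K {H | M.IsFlat H ∧ a ∉ H ∧ M.closure (insert a H) = K} := by
    ext H
    simp only [mem_ofPred_eq, mem_insert_iff]
    by_cases haH : a ∈ H
    · have hcl : ∀ {F}, a ∈ F → M.IsFlat F → M.closure (insert a F) = F := fun haF hF => by
        rw [insert_eq_self.2 haF, hF.closure]
      grind
    · grind
  have h := hmu.finsum_closure_insert_eq_zero ha hK haK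
  rw [hsplit, finsum_mem_insert _ (fun h => h.2.1 haK)
    (M.finite_setOf_isFlat.subset fun _ hH => hH.1)] at h
  exact eq_neg_of_add_eq_zero_left h

end IsMobiusOfFlats

theorem unsigned_mobius_pos {α : Type*} (M : Matroid α) [M.Finite]
    (mu : Set α → Set α → ℤ) (hmu : IsMobiusOfFlats M mu)
    (K : Set α) (hK : M.IsFlat K) :
    0 < (-1 : ℤ) ^ matroidRk M K * mu (M.closure ∅) K := by
  induction hn : matroidRk M K generalizing K with
  | zero =>
    simp [hK.eq_closure_empty_of_matroidRk_eq_zero hn, hmu.apply_self (Matroid.isFlat_closure ∅)]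
  | succ n ih =>
    obtain ⟨a, haK, ha⟩ : ∃ a ∈ K, a ∉ M.closure ∅ := not_subset.1 fun hK0 => by
      rw [hK0.antisymm hK.loops_subset, M.matroidRk_closure_empty] at hn
      exact n.succ_ne_zero hn.symm
    set S := {H | M.IsFlat H ∧ a ∉ H ∧ M.closure (insert a H) = K}
    have hS : S.Finite := M.finite_setOf_isFlat.subset fun _ hH => hH.1
    have hrk : ∀ H ∈ S, matroidRk M H = n := by
      rintro H ⟨hH, haH, rfl⟩
      simpa [hH.matroidRk_closure_insert ⟨hK.subset_ground haK, haH⟩] using hn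
    have hsign : (-1 : ℤ) ^ (n + 1) * mu (M.closure ∅) K =
        ∑ᶠ H ∈ S, (-1) ^ n * mu (M.closure ∅) H := by
      rw [hmu.apply_closure_empty_eq_neg_finsum hK haK ha, ← mul_finsum_mem' _ _ hS]
      ring
    obtain ⟨H₀, hH₀⟩ := hK.exists_isFlat_notMem_closure_insert_eq haK ha
    rw [hsign]
    exact finsum_cond_pos (fun H hH => (ih H hH.1 (hrk H hH)).le)
      ⟨H₀, hH₀, ih H₀ hH₀.1 (hrk H₀ hH₀)⟩ (hS.subset inter_subset_right)
end
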